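/- If the balance conditions W_{p+1}ᵀW_{p+1} = W_p W_pᵀ hold along the gradient flow and X = W_N⋯W_1 where each W_p = Q_p Λ Q_{p-1}ᵀ with Λ diagonal positive, then A_{p+1}A_{p+1}ᵀ = (XXᵀ)^{(N-p)/N} and B_{p-1}ᵀB_{p-1} = (XᵀX)^{(p-1)/N}, where A_p = W_N⋯W_p and B_p = W_p⋯W_1 and fractional powers are defined spectrally. -/

import Mathlib

/-!
Consecutive factors `W_{i+1} W_i = Q_{i+1} Λ (Q_iᵀ Q_i) Λ Q_{i-1}ᵀ = Q_{i+1} Λ² Q_{i-1}ᵀ`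
telescope because the inner orthogonal factors cancel, so every partial product is
`Q_top Λ^k Q_botᵀ`. Multiplying such a product by its transpose cancels the orthogonal
factor on one side and doubles the power of the symmetric `Λ^k`.
-/

open Matrix

/-- The partial product `A_{p+1} = W_N ⋯ W_{p+1}` (with `A_{N+1} = 1`). -/
def Aprod (d : ℕ) (W : ℕ → Matrix (Fin d) (Fin d) ℝ) (N p : ℕ) :
    Matrix (Fin d) (Fin d) ℝ :=
  ((List.range (N - p)).map (fun q => W (N - q))).prod

/-- The partial product `B_p = W_p ⋯ W_1` (with `B_0 = 1`). -/
def Bprod (d : ℕ) (W : ℕ → Matrix (Fin d) (Fin d) ℝ) (p : ℕ) :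
    Matrix (Fin d) (Fin d) ℝ :=
  ((List.range p).map (fun q => W (p - q))).prod

namespace Matrix

variable {n R : Type*} [Fintype n] [DecidableEq n] [CommSemiring R]

theorem transpose_mul_mul_cancel_left {P : Matrix n n R} (hP : Pᵀ * P = 1)
    (B : Matrix n n R) : Pᵀ * (P * B) = B := by
  rw [← mul_assoc, hP, one_mul]

theorem conj_mul_conj_transpose_of_isSymm {P : Matrix n n R} (hP : Pᵀ * P = 1)
    {M : Matrix n n R} (hM : M.IsSymm) (Q : Matrix n n R) :
    (Q * M * Pᵀ) * (Q * M * Pᵀ)ᵀ = Q * (M * M) * Qᵀ := by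
  simp only [transpose_mul, transpose_transpose, hM.eq, mul_assoc,
    transpose_mul_mul_cancel_left hP]

theorem conj_transpose_mul_conj_of_isSymm {Q : Matrix n n R} (hQ : Qᵀ * Q = 1)
    {M : Matrix n n R} (hM : M.IsSymm) (P : Matrix n n R) :
    (Q * M * Pᵀ)ᵀ * (Q * M * Pᵀ) = P * (M * M) * Pᵀ := by
  simp only [transpose_mul, transpose_transpose, hM.eq, mul_assoc,
    transpose_mul_mul_cancel_left hQ]

theorem prod_range_conj_eq_conj_pow (W Q : ℕ → Matrix n n R) (D : Matrix n n R) (a : ℕ) :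
    ∀ k, (∀ i, a ≤ i → i ≤ a + k → (Q i)ᵀ * Q i = 1) →
      (∀ i, a < i → i ≤ a + k → W i = Q i * D * (Q (i - 1))ᵀ) →
      ((List.range k).map fun q => W (a + k - q)).prod = Q (a + k) * D ^ k * (Q a)ᵀ
  | 0, hQ, _ => by simp [mul_eq_one_comm.mp (hQ a le_rfl (by simp))]
  | k + 1, hQ, hW => by
    have ih := prod_range_conj_eq_conj_pow W Q D a k
      (fun i hi hik => hQ i hi (by omega)) (fun i hi hik => hW i hi (by omega))
    have hcons : ((List.range (k + 1)).map fun q => W (a + (k + 1) - q)) =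
        W (a + (k + 1)) :: (List.range k).map fun q => W (a + k - q) := by
      simp only [List.range_succ_eq_map, List.map_cons, List.map_map, Function.comp_def,
        Nat.sub_zero, Nat.succ_sub_succ, ← add_assoc]
    rw [hcons, List.prod_cons, ih, hW _ (by omega) le_rfl, ← add_assoc, Nat.add_sub_cancel,
      pow_succ']
    simp only [mul_assoc, transpose_mul_mul_cancel_left (hQ (a + k) (by omega) (by omega))]

end Matrix

section PartialProducts

variable {d N : ℕ} {lam : Fin d → ℝ} {Q W : ℕ → Matrix (Fin d) (Fin d) ℝ}

theorem Aprod_eq (hQ : ∀ p, p ≤ N → (Q p)ᵀ * Q p = 1)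
    (hW : ∀ p, 1 ≤ p → p ≤ N → W p = Q p * diagonal lam * (Q (p - 1))ᵀ)
    {p : ℕ} (hp : p ≤ N) :
    Aprod d W N p = Q N * diagonal lam ^ (N - p) * (Q p)ᵀ := by
  obtain ⟨k, rfl⟩ := Nat.exists_eq_add_of_le hp
  rw [Aprod, Nat.add_sub_cancel_left]
  exact prod_range_conj_eq_conj_pow W Q _ p k (fun i _ hi => hQ i hi)
    (fun i hi hik => hW i (by omega) hik)

theorem Bprod_eq (hQ : ∀ p, p ≤ N → (Q p)ᵀ * Q p = 1)
    (hW : ∀ p, 1 ≤ p → p ≤ N → W p = Q p * diagonal lam * (Q (p - 1))ᵀ)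
    {p : ℕ} (hp : p ≤ N) :
    Bprod d W p = Q p * diagonal lam ^ p * (Q 0)ᵀ := by
  simpa only [Bprod, zero_add] using prod_range_conj_eq_conj_pow W Q _ 0 p
    (fun i _ hi => hQ i (by omega)) (fun i hi hik => hW i hi (by omega))

end PartialProducts

theorem partial_products_balanced_general (N d : ℕ)
    (lam : Fin d → ℝ)
    (Q : ℕ → Matrix (Fin d) (Fin d) ℝ) (hQ : ∀ p, p ≤ N → (Q p)ᵀ * Q p = 1)
    (W : ℕ → Matrix (Fin d) (Fin d) ℝ)
    (hW : ∀ p, 1 ≤ p → p ≤ N → W p = Q p * Matrix.diagonal lam * (Q (p - 1))ᵀ) :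
    ∀ p, 1 ≤ p → p ≤ N →
      Aprod d W N p * (Aprod d W N p)ᵀ =
        Q N * (Matrix.diagonal lam) ^ (2 * (N - p)) * (Q N)ᵀ ∧
      (Bprod d W (p - 1))ᵀ * Bprod d W (p - 1) =
        Q 0 * (Matrix.diagonal lam) ^ (2 * (p - 1)) * (Q 0)ᵀ := by
  intro p _ hpN
  have hsymm : ∀ k : ℕ, (diagonal lam ^ k).IsSymm := (isSymm_diagonal lam).pow
  constructor
  · rw [Aprod_eq hQ hW hpN, conj_mul_conj_transpose_of_isSymm (hQ p hpN) (hsymm _),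
      ← pow_add, two_mul]
  · rw [Bprod_eq hQ hW (by omega : p - 1 ≤ N),
      conj_transpose_mul_conj_of_isSymm (hQ _ (by omega)) (hsymm _), ← pow_add, two_mul]

/-- On the balanced manifold, with `W_p = Q_p Λ Q_{p-1}ᵀ`, the partial products satisfy
`A_{p+1} A_{p+1}ᵀ = (XXᵀ)^{(N-p)/N} = Q_N Λ^{2(N-p)} Q_Nᵀ` and
`B_{p-1}ᵀ B_{p-1} = (XᵀX)^{(p-1)/N} = Q_0 Λ^{2(p-1)} Q_0ᵀ` (fractional powers of
`XXᵀ = Q_N Λ^{2N} Q_Nᵀ` and `XᵀX = Q_0 Λ^{2N} Q_0ᵀ` being defined spectrally). -/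
theorem partial_products_balanced (N d : ℕ) (hN : 1 ≤ N)
    (lam : Fin d → ℝ) (hlam : ∀ i, 0 < lam i)
    (Q : ℕ → Matrix (Fin d) (Fin d) ℝ) (hQ : ∀ p, p ≤ N → (Q p)ᵀ * Q p = 1)
    (W : ℕ → Matrix (Fin d) (Fin d) ℝ)
    (hW : ∀ p, 1 ≤ p → p ≤ N → W p = Q p * Matrix.diagonal lam * (Q (p - 1))ᵀ) :
    ∀ p, 1 ≤ p → p ≤ N →
      Aprod d W N p * (Aprod d W N p)ᵀ =
        Q N * (Matrix.diagonal lam) ^ (2 * (N - p)) * (Q N)ᵀ ∧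
      (Bprod d W (p - 1))ᵀ * Bprod d W (p - 1) =
        Q 0 * (Matrix.diagonal lam) ^ (2 * (p - 1)) * (Q 0)ᵀ :=
  partial_products_balanced_general N d lam Q hQ W hW
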